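/- For all natural numbers n, m, the polynomial L := L_{n,m}(X,Y) ∈ ℚ[X,Y] satisfies the system of partial differential equations: X·(∂²L/∂X²) + Y·(∂²L/∂X∂Y) + (1−X)·(∂L/∂X) + n·L = 0 and X·(∂²L/∂Y∂X) + Y·(∂²L/∂Y²) + (1−Y)·(∂L/∂Y) + m·L = 0. -/

import Mathlib

/-!
Write `L_{n,m} = ∑ c(i,s) X^s Y^i`. The operator of the first equation sends `X^s Y^i` to
`s (s + i) X^(s-1) Y^i + (n - s) X^s Y^i`, so it annihilates `L_{n,m}` iff
`(s + 1)(s + i + 1) c(i,s+1) + (n - s) c(i,s) = 0`, which follows from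
`C(n+i, n-s) (n - s) = C(n+i, n-s-1) (i + s + 1)`. Since
`C(m+n, m-i) C(n+i, n-s) = (m+n)! / ((m-i)! (n-s)! (i+s)!)` is symmetric, `L_{n,m}(X,Y) = L_{m,n}(Y,X)`,
and the second equation is the first one for `L_{m,n}` with the variables exchanged.
-/

open MvPolynomial

/-- The two-variable Laguerre polynomial `L_{n,m}(X,Y) ∈ ℚ[X,Y]`,
with `X = X 0` and `Y = X 1`. -/
noncomputable def LagQ (n m : ℕ) : MvPolynomial (Fin 2) ℚ :=
  ∑ i ∈ Finset.range (m + 1), ∑ s ∈ Finset.range (n + 1),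
    MvPolynomial.C ((-1 : ℚ) ^ (i + s) / ((i.factorial : ℚ) * (s.factorial : ℚ)) *
        ((m + n).choose (m - i) : ℚ) * ((n + i).choose (n - s) : ℚ)) *
      MvPolynomial.X 0 ^ s * MvPolynomial.X 1 ^ i

open Finset

section Bivariate

variable {R σ : Type*} [CommRing R] {x y : σ}

variable (x y) in
noncomputable def laguerreOp (N : ℕ) (f : MvPolynomial σ R) : MvPolynomial σ R :=
  X x * pderiv x (pderiv x f) + X y * pderiv y (pderiv x f) + (1 - X x) * pderiv x f +
    (N : MvPolynomial σ R) * f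

variable (x y) in
noncomputable def bivariatePoly (M N : ℕ) : (ℕ → ℕ → R) →ₗ[R] MvPolynomial σ R where
  toFun c := ∑ i ∈ range M, ∑ s ∈ range N, C (c i s) * X x ^ s * X y ^ i
  map_add' c d := by simp only [Pi.add_apply, C_add, add_mul, sum_add_distrib]
  map_smul' a c := by
    simp only [Pi.smul_apply, smul_eq_mul, C_mul, smul_sum, smul_eq_C_mul, mul_assoc,
      RingHom.id_apply]

theorem bivariatePoly_apply (M N : ℕ) (c : ℕ → ℕ → R) :
    bivariatePoly x y M N c = ∑ i ∈ range M, ∑ s ∈ range N, C (c i s) * X x ^ s * X y ^ i :=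
  rfl

theorem bivariatePoly_congr {M N : ℕ} {c d : ℕ → ℕ → R}
    (h : ∀ i < M, ∀ s < N, c i s = d i s) :
    bivariatePoly x y M N c = bivariatePoly x y M N d := by
  simp only [bivariatePoly_apply]
  refine sum_congr rfl fun i hi => sum_congr rfl fun s hs => ?_
  rw [h i (mem_range.1 hi) s (mem_range.1 hs)]

theorem bivariatePoly_comm (M N : ℕ) (c : ℕ → ℕ → R) :
    bivariatePoly x y M N c = bivariatePoly y x N M (fun s i => c i s) := by
  simp only [bivariatePoly_apply]
  rw [sum_comm]
  exact sum_congr rfl fun _ _ => sum_congr rfl fun _ _ => mul_right_comm _ _ _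

theorem bivariatePoly_succ_of_forall_eq_zero {M N : ℕ} {c : ℕ → ℕ → R} (h : ∀ i, c i N = 0) :
    bivariatePoly x y M (N + 1) c = bivariatePoly x y M N c := by
  simp only [bivariatePoly_apply, sum_range_succ _ N, h, C_0, zero_mul, add_zero]

theorem X_mul_pderiv_C_mul_X_pow_mul_X_pow (hxy : x ≠ y) (c : R) (s i : ℕ) :
    X x * pderiv x (C c * X x ^ s * X y ^ i) = C (s * c) * X x ^ s * X y ^ i := by
  classical
  have h : (C c * X x ^ s * X y ^ i : MvPolynomial σ R) =
      monomial (Finsupp.single x s + Finsupp.single y i) c := by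
    simp [X_pow_eq_monomial, C_mul_monomial, monomial_mul]
  rw [h, X_mul_pderiv_monomial, ← h]
  simp [hxy.symm, nsmul_eq_mul, mul_assoc]

theorem pderiv_C_mul_X_pow_succ_mul_X_pow (hxy : x ≠ y) (c : R) (s i : ℕ) :
    pderiv x (C c * X x ^ (s + 1) * X y ^ i) = C ((s + 1) * c) * X x ^ s * X y ^ i := by
  simp [hxy.symm]
  ring

theorem X_mul_pderiv_bivariatePoly_left (hxy : x ≠ y) (M N : ℕ) (c : ℕ → ℕ → R) :
    X x * pderiv x (bivariatePoly x y M N c) = bivariatePoly x y M N (fun i s => s * c i s) := by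
  simp only [bivariatePoly_apply, map_sum, mul_sum, X_mul_pderiv_C_mul_X_pow_mul_X_pow hxy]

theorem X_mul_pderiv_bivariatePoly_right (hxy : x ≠ y) (M N : ℕ) (c : ℕ → ℕ → R) :
    X y * pderiv y (bivariatePoly x y M N c) = bivariatePoly x y M N (fun i s => i * c i s) := by
  rw [bivariatePoly_comm, X_mul_pderiv_bivariatePoly_left hxy.symm, bivariatePoly_comm]

theorem pderiv_bivariatePoly_succ (hxy : x ≠ y) (M N : ℕ) (c : ℕ → ℕ → R) :
    pderiv x (bivariatePoly x y M (N + 1) c) =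
      bivariatePoly x y M N (fun i s => (s + 1) * c i (s + 1)) := by
  simp only [bivariatePoly_apply, map_sum, sum_range_succ' _ N, map_add,
    pderiv_C_mul_X_pow_succ_mul_X_pow hxy]
  simp [hxy.symm]

theorem laguerreOp_bivariatePoly_eq_zero (hxy : x ≠ y) {M N : ℕ} {c : ℕ → ℕ → R}
    (hc : ∀ i s, s < N → (s + 1) * (s + i + 1) * c i (s + 1) + (N - s) * c i s = 0) :
    laguerreOp x y N (bivariatePoly x y M (N + 1) c) = 0 := by
  set L := bivariatePoly x y M (N + 1) c
  have hN : (N : MvPolynomial σ R) * L - X x * pderiv x L =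
      bivariatePoly x y M N (fun i s => (N - s) * c i s) := by
    rw [← map_natCast C, ← smul_eq_C_mul, X_mul_pderiv_bivariatePoly_left hxy, ← map_smul,
      ← map_sub, bivariatePoly_succ_of_forall_eq_zero (by simp)]
    congr 1
    funext i s
    simp only [Pi.sub_apply, Pi.smul_apply, smul_eq_mul]
    ring
  calc laguerreOp x y N L
      = (X x * pderiv x (pderiv x L) + X y * pderiv y (pderiv x L) + pderiv x L) +
          ((N : MvPolynomial σ R) * L - X x * pderiv x L) := by
        rw [laguerreOp]
        ring
    _ = bivariatePoly x y M N
          (fun i s => (s + 1) * (s + i + 1) * c i (s + 1) + (N - s) * c i s) := by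
      rw [hN, pderiv_bivariatePoly_succ hxy, X_mul_pderiv_bivariatePoly_left hxy,
        X_mul_pderiv_bivariatePoly_right hxy, ← map_add, ← map_add, ← map_add]
      congr 1
      funext i s
      simp only [Pi.add_apply]
      ring
    _ = 0 := by
      rw [bivariatePoly_congr (d := 0) fun i _ s hs => hc i s hs, map_zero]

end Bivariate

def laguerreCoeff (n m i s : ℕ) : ℚ :=
  (-1 : ℚ) ^ (i + s) / ((i.factorial : ℚ) * (s.factorial : ℚ)) *
    ((m + n).choose (m - i) : ℚ) * ((n + i).choose (n - s) : ℚ)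

theorem laguerreCoeff_succ_right {n m i s : ℕ} (hs : s < n) :
    (s + 1) * (s + i + 1) * laguerreCoeff n m i (s + 1) + (n - s) * laguerreCoeff n m i s = 0 := by
  set k := n - (s + 1)
  have hk : (n : ℚ) - s = k + 1 := by
    rw [sub_eq_iff_eq_add]
    norm_cast
    omega
  have h := Nat.choose_succ_right_eq (n + i) k
  rw [(by omega : n + i - k = s + i + 1)] at h
  have h' := congrArg (Nat.cast : ℕ → ℚ) h
  push_cast at h'
  simp only [laguerreCoeff, (by omega : n - s = k + 1), Nat.factorial_succ, pow_add, pow_succ, hk]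
  push_cast
  field_simp
  linear_combination (-1 : ℚ) ^ i * (-1) ^ s * ((m + n).choose (m - i) : ℚ) * h'

theorem choose_mul_choose_comm {n m i s : ℕ} (hi : i ≤ m) (hs : s ≤ n) :
    (m + n).choose (m - i) * (n + i).choose (n - s) =
      (n + m).choose (n - s) * (m + s).choose (m - i) := by
  rw [Nat.choose_symm_of_eq_add (by omega : m + n = (m - i) + (n + i)),
    Nat.choose_mul (by omega : n - s ≤ n + i), add_comm n m,
    (by omega : m + n - (n - s) = m + s), (by omega : n + i - (n - s) = i + s),
    Nat.choose_symm_of_eq_add (by omega : m + s = (i + s) + (m - i))]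

theorem laguerreCoeff_comm {n m i s : ℕ} (hi : i ≤ m) (hs : s ≤ n) :
    laguerreCoeff n m i s = laguerreCoeff m n s i := by
  have h := congrArg (Nat.cast : ℕ → ℚ) (choose_mul_choose_comm hi hs)
  push_cast at h
  simp only [laguerreCoeff, add_comm s i, mul_comm (s.factorial : ℚ)]
  linear_combination (-1 : ℚ) ^ (i + s) / ((i.factorial : ℚ) * (s.factorial : ℚ)) * h

theorem LagQ_eq_bivariatePoly (n m : ℕ) :
    LagQ n m = bivariatePoly 0 1 (m + 1) (n + 1) (laguerreCoeff n m) :=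
  rfl

theorem LagQ_eq_bivariatePoly_swap (n m : ℕ) :
    LagQ n m = bivariatePoly 1 0 (n + 1) (m + 1) (laguerreCoeff m n) := by
  rw [LagQ_eq_bivariatePoly, bivariatePoly_comm]
  exact bivariatePoly_congr fun s hs i hi => laguerreCoeff_comm (by omega) (by omega)

theorem stmt_4 (n m : ℕ) :
    MvPolynomial.X 0 * pderiv 0 (pderiv 0 (LagQ n m)) +
        MvPolynomial.X 1 * pderiv 1 (pderiv 0 (LagQ n m)) +
        (1 - MvPolynomial.X 0) * pderiv 0 (LagQ n m) +
        (n : MvPolynomial (Fin 2) ℚ) * LagQ n m = 0 ∧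
      MvPolynomial.X 0 * pderiv 0 (pderiv 1 (LagQ n m)) +
        MvPolynomial.X 1 * pderiv 1 (pderiv 1 (LagQ n m)) +
        (1 - MvPolynomial.X 1) * pderiv 1 (LagQ n m) +
        (m : MvPolynomial (Fin 2) ℚ) * LagQ n m = 0 := by
  have hxy : (0 : Fin 2) ≠ 1 := by decide
  have hX : laguerreOp 0 1 n (LagQ n m) = 0 := by
    rw [LagQ_eq_bivariatePoly]
    exact laguerreOp_bivariatePoly_eq_zero hxy fun _ _ hs => laguerreCoeff_succ_right hs
  have hY : laguerreOp 1 0 m (LagQ n m) = 0 := by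
    rw [LagQ_eq_bivariatePoly_swap]
    exact laguerreOp_bivariatePoly_eq_zero hxy.symm fun _ _ hs => laguerreCoeff_succ_right hs
  rw [laguerreOp] at hX hY
  exact ⟨hX, by linear_combination hY⟩
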